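/- arXiv:1011.6034 — 2 statements merged into one kernel-verified Lean document; each statement's English description precedes it below -/
import Mathlib

section
/- For every pair (x, y) ∈ F_n × F_m, there exist x' ∈ F_n and z ∈ F_{nm} such that φ_{n,m}(z) · (x', 1) = (x, y) in the group F_n × F_m. -/
/-- The generator index `m*(i-1)+j` (0-based: `m*i+j`) of the free group `F_{nm}`. -/
def genIdx {n m : ℕ} (i : Fin n) (j : Fin m) : Fin (n * m) :=
  ⟨m * i.val + j.val, by
    have hi := i.isLt; have hj := j.isLt
    calc m * i.val + j.val < m * (i.val + 1) := by rw [Nat.mul_succ]; omega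
    _ ≤ m * n := Nat.mul_le_mul_left _ (by omega)
    _ = n * m := Nat.mul_comm m n⟩

/-- The homomorphism `φ_{n,m} : F_{nm} → F_n × F_m` sending the generator
`c_{m(i-1)+j}` to `(a_i, b_j)`. -/
noncomputable def freePhi (n m : ℕ) :
    FreeGroup (Fin (n * m)) →* FreeGroup (Fin n) × FreeGroup (Fin m) :=
  FreeGroup.lift fun k =>
    have hm : 0 < m := by
      rcases Nat.eq_zero_or_pos m with h | h
      · exact absurd k.isLt (by simp [h])
      · exact h
    (FreeGroup.of ⟨k.val / m, (Nat.div_lt_iff_lt_mul hm).2 k.isLt⟩,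
     FreeGroup.of ⟨k.val % m, Nat.mod_lt _ hm⟩)

/-- for every `(x,y) ∈ F_n × F_m` there are `x' ∈ F_n`, `z ∈ F_{nm}` with
`φ_{n,m}(z) · (x', 1) = (x, y)`. -/
theorem stmt3 (n m : ℕ) (hn : 1 ≤ n) (hm : 1 ≤ m)
    (x : FreeGroup (Fin n)) (y : FreeGroup (Fin m)) :
    ∃ (x' : FreeGroup (Fin n)) (z : FreeGroup (Fin (n * m))),
      freePhi n m z * (x', 1) = (x, y) := by
  -- lift y into F_{nm} via b_j ↦ c_{genIdx 0 j}
  let ψ : FreeGroup (Fin m) →* FreeGroup (Fin (n * m)) :=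
    FreeGroup.lift fun j => FreeGroup.of (genIdx ⟨0, hn⟩ j)
  have hsnd : ∀ w : FreeGroup (Fin m), (freePhi n m (ψ w)).2 = w := by
    intro w
    have : ((MonoidHom.snd _ _).comp ((freePhi n m).comp ψ)) = MonoidHom.id _ := by
      apply FreeGroup.ext_hom
      intro j
      simp only [MonoidHom.comp_apply, MonoidHom.id_apply, ψ,
        FreeGroup.lift_apply_of, freePhi, genIdx]
      exact congrArg FreeGroup.of (Fin.ext (by simp [Nat.mod_eq_of_lt j.isLt]))
    exact congrArg (fun f => f w) this
  refine ⟨(freePhi n m (ψ y)).1⁻¹ * x, ψ y, ?_⟩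
  ext
  · simp
  · simp [hsnd y]
end

section
/- For every pair (x, y) ∈ F_n × F_m, there exist y' ∈ F_m and z ∈ F_{nm} such that φ_{n,m}(z) · (1, y') = (x, y) in F_n × F_m. -/
/-- for every `(x,y) ∈ F_n × F_m` there are `y' ∈ F_m`, `z ∈ F_{nm}` with
`φ_{n,m}(z) · (1, y') = (x, y)`. -/
theorem stmt4 (n m : ℕ) (hn : 1 ≤ n) (hm : 1 ≤ m)
    (x : FreeGroup (Fin n)) (y : FreeGroup (Fin m)) :
    ∃ (y' : FreeGroup (Fin m)) (z : FreeGroup (Fin (n * m))),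
      freePhi n m z * (1, y') = (x, y) := by
  set ψ : FreeGroup (Fin n) →* FreeGroup (Fin (n * m)) :=
    FreeGroup.lift fun i => FreeGroup.of (genIdx i (⟨0, hm⟩ : Fin m))
  have key : ((MonoidHom.fst _ _).comp ((freePhi n m).comp ψ)) = MonoidHom.id _ := by
    apply FreeGroup.ext_hom
    intro i
    simp only [MonoidHom.comp_apply, MonoidHom.id_apply, ψ,
      FreeGroup.lift_apply_of, freePhi, genIdx]
    show FreeGroup.of _ = FreeGroup.of i
    congr 1
    apply Fin.ext
    simp [Nat.mul_div_cancel_left _ (Nat.lt_of_lt_of_le Nat.zero_lt_one hm)]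
  refine ⟨((freePhi n m (ψ x)).2)⁻¹ * y, ψ x, ?_⟩
  have h1 : (freePhi n m (ψ x)).1 = x := congrArg (· x) (congrArg (↑·) key)
  ext
  · simpa using h1
  · simp
end
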